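/- arXiv:1501.07686 — 5 statements merged into one kernel-verified Lean document; each statement's English description precedes it below -/
import Mathlib

section
/- Let L1, L2 and L3 be three tree languages over a graded alphabet Σ, and let a and b be two distinct symbols in Σ_0 such that L3 ⊆ T(Σ∖{a}), i.e. the symbol a appears in no tree of L3. Then (L1 ·_a L2) ·_b L3 = (L1 ·_b L3) ·_a (L2 ·_b L3). -/
/-!
Both sides are unions over `t ∈ L1`, so it suffices to show
`(t ·_a L2) ·_b L3 = (t ·_b L3) ·_a (L2 ·_b L3)` for a single tree `t`, by induction on `t`.
At a node labelled neither `a` nor `b` both products act childwise, so the induction hypothesis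
applies. At the leaf `a` both sides are `L2 ·_b L3`, as the leaf `a` is left fixed by `·_b`.
At the leaf `b` both sides are `L3`: on the right, because `·_a` fixes every tree of `L3`.
-/

attribute [local instance] Classical.propDecidable

/-- Trees over a graded alphabet: symbols `α` with arity function `ar`. -/
inductive GTree (α : Type) (ar : α → ℕ) : Type
  | node (f : α) (children : Fin (ar f) → GTree α ar) : GTree α ar

namespace GTree

variable {α : Type} {ar : α → ℕ}

/-- The `c`-product of a tree with a tree language. -/
def cprod (c : α) : GTree α ar → Set (GTree α ar) → Set (GTree α ar)
  | node f ch, L =>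
    if f = c then L
    else { s | ∃ ch' : Fin (ar f) → GTree α ar,
            s = node f ch' ∧ ∀ i, ch' i ∈ cprod c (ch i) L }

/-- The `c`-product of two tree languages. -/
def lprod (c : α) (L L' : Set (GTree α ar)) : Set (GTree α ar) :=
  ⋃ t ∈ L, cprod c t L'

/-- The single-node tree `c`, for `c` of rank 0. -/
def leaf (c : α) (hc : ar c = 0) : GTree α ar :=
  node c (fun i => (i.cast hc).elim0)

/-- The iterated `c`-product `L^{n,c}`. -/
def iterProd (c : α) (hc : ar c = 0) (L : Set (GTree α ar)) : ℕ → Set (GTree α ar)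
  | 0 => {leaf c hc}
  | n + 1 => iterProd c hc L n ∪ lprod c L (iterProd c hc L n)

/-- The `c`-closure `L^{*_c}`. -/
def closure (c : α) (hc : ar c = 0) (L : Set (GTree α ar)) : Set (GTree α ar) :=
  ⋃ n, iterProd c hc L n

/-- The symbol `a` occurs (appears) in the tree. -/
def occurs (a : α) : GTree α ar → Prop
  | node f ch => f = a ∨ ∃ i, occurs a (ch i)

end GTree

namespace GTree

variable {α : Type} {ar : α → ℕ}

open Set

lemma cprod_node_self (c : α) (ch : Fin (ar c) → GTree α ar) (L : Set (GTree α ar)) :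
    cprod c (node c ch) L = L := by
  simp [cprod]

lemma cprod_node_of_ne {c f : α} (hf : f ≠ c) (ch : Fin (ar f) → GTree α ar)
    (L : Set (GTree α ar)) :
    cprod c (node f ch) L = node f '' univ.pi fun i => cprod c (ch i) L := by
  ext s
  simp [cprod, hf, and_comm, eq_comm]

lemma cprod_of_not_occurs {c : α} {t : GTree α ar} (h : ¬ occurs c t) (L : Set (GTree α ar)) :
    cprod c t L = {t} := by
  induction t with
  | node f ch ih =>
    simp only [occurs, not_or, not_exists] at h
    rw [cprod_node_of_ne h.1, univ_pi_eq_singleton_iff.mpr fun i => ih i (h.2 i), image_singleton]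

lemma not_occurs_node_of_arity_eq_zero {c f : α} (hf : ar f = 0) (hfc : f ≠ c)
    (ch : Fin (ar f) → GTree α ar) : ¬ occurs c (node f ch) := by
  simp only [occurs, hfc, false_or, not_exists]
  intro i
  exact (i.cast hf).elim0

lemma lprod_singleton (c : α) (t : GTree α ar) (L : Set (GTree α ar)) :
    lprod c {t} L = cprod c t L :=
  biUnion_singleton t _

lemma lprod_of_forall_not_occurs {c : α} {L : Set (GTree α ar)} (h : ∀ t ∈ L, ¬ occurs c t)
    (M : Set (GTree α ar)) : lprod c L M = L :=
  calc lprod c L M = ⋃ t ∈ L, {t} := iUnion₂_congr fun t ht => cprod_of_not_occurs (h t ht) M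
    _ = L := biUnion_of_singleton L

lemma lprod_lprod (c d : α) (L L' M : Set (GTree α ar)) :
    lprod d (lprod c L L') M = ⋃ t ∈ L, lprod d (cprod c t L') M := by
  simp only [lprod, biUnion_iUnion]

lemma lprod_image_node {d f : α} (hf : f ≠ d) (S : Fin (ar f) → Set (GTree α ar))
    (M : Set (GTree α ar)) :
    lprod d (node f '' univ.pi S) M = node f '' univ.pi fun i => lprod d (S i) M := by
  simp only [lprod, biUnion_image, cprod_node_of_ne hf, ← image_iUnion₂]
  rw [biUnion_univ_pi S fun _ t => cprod d t M]

lemma lprod_cprod_comm {a b : α} (ha : ar a = 0) (hb : ar b = 0) (hab : a ≠ b)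
    {L2 L3 : Set (GTree α ar)} (h3 : ∀ t ∈ L3, ¬ occurs a t) (t : GTree α ar) :
    lprod b (cprod a t L2) L3 = lprod a (cprod b t L3) (lprod b L2 L3) := by
  induction t with
  | node f ch ih =>
    rcases eq_or_ne f a with rfl | hfa
    · rw [cprod_node_self, cprod_of_not_occurs (not_occurs_node_of_arity_eq_zero ha hab ch),
        lprod_singleton, cprod_node_self]
    rcases eq_or_ne f b with rfl | hfb
    · rw [cprod_of_not_occurs (not_occurs_node_of_arity_eq_zero hb hfa ch), lprod_singleton,
        cprod_node_self, lprod_of_forall_not_occurs h3]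
    · rw [cprod_node_of_ne hfa, cprod_node_of_ne hfb, lprod_image_node hfb, lprod_image_node hfa]
      simp only [ih]

end GTree

/-- if `a ≠ b` are rank-0 symbols and `a` appears in no tree of `L3`,
then `(L1 ·_a L2) ·_b L3 = (L1 ·_b L3) ·_a (L2 ·_b L3)`. -/
theorem lprod_distrib {α : Type} {ar : α → ℕ} (a b : α)
    (ha : ar a = 0) (hb : ar b = 0) (hab : a ≠ b)
    (L1 L2 L3 : Set (GTree α ar)) (h3 : ∀ t ∈ L3, ¬ GTree.occurs a t) :
    GTree.lprod b (GTree.lprod a L1 L2) L3 =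
      GTree.lprod a (GTree.lprod b L1 L3) (GTree.lprod b L2 L3) := by
  rw [GTree.lprod_lprod, GTree.lprod_lprod]
  exact Set.iUnion₂_congr fun t _ => GTree.lprod_cprod_comm ha hb hab h3 t
end

section
/- (Arden's lemma for trees, fixed-point part.) Let A and B be two tree languages over a graded alphabet Σ and let c be a symbol in Σ_0. Then the language A^{*_c} ·_c B satisfies the equation L = A ·_c L ∪ B, i.e. A ·_c (A^{*_c} ·_c B) ∪ B = A^{*_c} ·_c B. -/
/-!
With `Sₙ = A^{n,c} ·_c B`, associativity of the `c`-product gives `S₀ = B` and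
`Sₙ₊₁ = Sₙ ∪ A ·_c Sₙ`. The `c`-product with a fixed tree commutes with unions of increasing
chains, so `A ·_c ⋃ Sₙ = ⋃ A ·_c Sₙ`, and the equation becomes a statement about this recursion.
-/

attribute [local instance] Classical.propDecidable

namespace Set

theorem iUnion_union_eq_iUnion_of_succ_eq_union {β : Type*} {F : Set β → Set β}
    {S : ℕ → Set β} {B : Set β} (h0 : S 0 = B) (hsucc : ∀ n, S (n + 1) = S n ∪ F (S n)) :
    (⋃ n, F (S n)) ∪ B = ⋃ n, S n := by
  refine Subset.antisymm (union_subset ?_ ?_) (iUnion_subset fun n => ?_)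
  · exact iUnion_subset fun n => (hsucc n ▸ subset_union_right).trans (subset_iUnion S (n + 1))
  · exact h0 ▸ subset_iUnion S 0
  · induction n with
    | zero => exact h0 ▸ subset_union_right
    | succ n ih =>
      exact hsucc n ▸ union_subset ih
        (subset_union_of_subset_left (subset_iUnion (fun n => F (S n)) n) B)

end Set

namespace GTree

variable {α : Type} {ar : α → ℕ} {c : α}

theorem cprod_node_of_eq {f : α} (hf : f = c) (ch : Fin (ar f) → GTree α ar)
    (L : Set (GTree α ar)) : cprod c (node f ch) L = L := by
  simp [cprod, hf]

theorem mem_cprod_node_of_ne {f : α} (hf : f ≠ c) {ch : Fin (ar f) → GTree α ar}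
    {L : Set (GTree α ar)} {s : GTree α ar} :
    s ∈ cprod c (node f ch) L ↔
      ∃ ch', s = node f ch' ∧ ∀ i, ch' i ∈ cprod c (ch i) L := by
  simp [cprod, hf]

theorem mem_lprod {L L' : Set (GTree α ar)} {s : GTree α ar} :
    s ∈ lprod c L L' ↔ ∃ t ∈ L, s ∈ cprod c t L' := by
  simp [lprod]

theorem cprod_mono (t : GTree α ar) : Monotone (cprod c t) := by
  intro L L' h
  induction t with
  | node f ch ih =>
    by_cases hf : f = c
    · simpa only [cprod_node_of_eq hf] using h
    · intro s hs
      obtain ⟨ch', rfl, hch⟩ := (mem_cprod_node_of_ne hf).1 hs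
      exact (mem_cprod_node_of_ne hf).2 ⟨ch', rfl, fun i => ih i (hch i)⟩

theorem cprod_lprod (t : GTree α ar) (L L' : Set (GTree α ar)) :
    cprod c t (lprod c L L') = lprod c (cprod c t L) L' := by
  induction t with
  | node f ch ih =>
    by_cases hf : f = c
    · simp only [cprod_node_of_eq hf]
    ext s
    rw [mem_cprod_node_of_ne hf, mem_lprod]
    simp only [ih, mem_lprod]
    constructor
    · rintro ⟨ch', rfl, hch⟩
      choose u hu hu' using hch
      exact ⟨node f u, (mem_cprod_node_of_ne hf).2 ⟨u, rfl, hu⟩,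
        (mem_cprod_node_of_ne hf).2 ⟨ch', rfl, hu'⟩⟩
    · rintro ⟨v, hv, hsv⟩
      obtain ⟨u, rfl, hu⟩ := (mem_cprod_node_of_ne hf).1 hv
      obtain ⟨ch', rfl, hch'⟩ := (mem_cprod_node_of_ne hf).1 hsv
      exact ⟨ch', rfl, fun i => ⟨u i, hu i, hch' i⟩⟩

theorem lprod_assoc (A L L' : Set (GTree α ar)) :
    lprod c (lprod c A L) L' = lprod c A (lprod c L L') := by
  ext s
  simp only [mem_lprod, cprod_lprod]
  constructor
  · rintro ⟨u, ⟨t, ht, hut⟩, hsu⟩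
    exact ⟨t, ht, u, hut, hsu⟩
  · rintro ⟨t, ht, u, hut, hsu⟩
    exact ⟨u, ⟨t, ht, hut⟩, hsu⟩

/-- Each tree has finitely many `c`-leaves, so substituting into them from a chain of languages
only ever reaches a finite stage of the chain. -/
theorem cprod_iUnion (t : GTree α ar) {L : ℕ → Set (GTree α ar)} (hL : Monotone L) :
    cprod c t (⋃ n, L n) = ⋃ n, cprod c t (L n) := by
  refine Set.Subset.antisymm ?_ (Set.iUnion_subset fun n => cprod_mono t (Set.subset_iUnion L n))
  induction t with
  | node f ch ih =>
    by_cases hf : f = c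
    · simp only [cprod_node_of_eq hf, subset_refl]
    intro s hs
    obtain ⟨ch', rfl, hch⟩ := (mem_cprod_node_of_ne hf).1 hs
    choose m hm using fun i => Set.mem_iUnion.1 (ih i (hch i))
    refine Set.mem_iUnion.2 ⟨Finset.univ.sup m, (mem_cprod_node_of_ne hf).2 ⟨ch', rfl, ?_⟩⟩
    exact fun i => cprod_mono (ch i) (hL (Finset.le_sup (Finset.mem_univ i))) (hm i)

theorem lprod_iUnion_left {ι : Type*} (L : ι → Set (GTree α ar)) (B : Set (GTree α ar)) :
    lprod c (⋃ i, L i) B = ⋃ i, lprod c (L i) B := by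
  simp only [lprod, Set.biUnion_iUnion]

theorem lprod_iUnion_right (A : Set (GTree α ar)) {L : ℕ → Set (GTree α ar)}
    (hL : Monotone L) :
    lprod c A (⋃ n, L n) = ⋃ n, lprod c A (L n) := by
  ext s
  simp only [lprod, cprod_iUnion _ hL, Set.mem_iUnion, exists_prop]
  exact ⟨fun ⟨t, ht, n, hs⟩ => ⟨n, t, ht, hs⟩,
    fun ⟨n, t, ht, hs⟩ => ⟨t, ht, n, hs⟩⟩

theorem lprod_union_left (L L' B : Set (GTree α ar)) :
    lprod c (L ∪ L') B = lprod c L B ∪ lprod c L' B :=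
  Set.biUnion_union L L' _

theorem lprod_leaf (hc : ar c = 0) (B : Set (GTree α ar)) : lprod c {leaf c hc} B = B := by
  simp [lprod, leaf, cprod]

end GTree

/-- Arden's lemma for trees, fixed-point part:
`A ·_c (A^{*_c} ·_c B) ∪ B = A^{*_c} ·_c B`. -/
theorem arden_fixed_point {α : Type} {ar : α → ℕ} (c : α) (hc : ar c = 0)
    (A B : Set (GTree α ar)) :
    GTree.lprod c A (GTree.lprod c (GTree.closure c hc A) B) ∪ B =
      GTree.lprod c (GTree.closure c hc A) B := by
  set S : ℕ → Set (GTree α ar) := fun n => GTree.lprod c (GTree.iterProd c hc A n) B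
  have hS0 : S 0 = B := GTree.lprod_leaf hc B
  have hSsucc : ∀ n, S (n + 1) = S n ∪ GTree.lprod c A (S n) := fun n => by
    simp only [S, GTree.iterProd, GTree.lprod_union_left, GTree.lprod_assoc]
  have hS : Monotone S :=
    monotone_nat_of_le_succ fun n => (hSsucc n).symm ▸ Set.subset_union_left
  rw [GTree.closure, GTree.lprod_iUnion_left, GTree.lprod_iUnion_right A hS]
  exact Set.iUnion_union_eq_iUnion_of_succ_eq_union hS0 hSsucc
end

section
/- Let 𝒳 = {𝔼_j = F_j | 1 ≤ j ≤ n} be an equation system over (Σ, {𝔼_1,…,𝔼_n}) and let 1 ≤ k ≤ n. Let 𝒳^k = {𝔼_k = F_k} ∪ {𝔼_j = (F_j)_{𝔼_k ← F_k} | j ≠ k, 1 ≤ j ≤ n} be the system obtained by substituting F_k for 𝔼_k in all other right-hand sides. Then 𝒳 and 𝒳^k are equivalent: an n-tuple 𝓛 of tree languages is a solution of 𝒳 if and only if it is a solution of 𝒳^k. -/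
/-! The language of `E_{x←F}` under `ρ` is the language of `E` under `ρ` with `x` reassigned to the
language of `F`. Both systems contain the equation `𝔼_k = F_k`, so for any of their solutions
that reassignment leaves `L` unchanged, and the two right-hand sides for each `𝔼_j` denote the
same language. -/

attribute [local instance] Classical.propDecidable

/-- Rational tree expressions over alphabet `(α, ar)` and variables `V`.
In the products and closures, the subscript symbol is required to have rank 0. -/
inductive RExp (α : Type) (ar : α → ℕ) (V : Type) : Type
  | zero : RExp α ar V
  | var (v : V) : RExp α ar V
  | node (f : α) (es : Fin (ar f) → RExp α ar V) : RExp α ar V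
  | plus (e₁ e₂ : RExp α ar V) : RExp α ar V
  | prod (c : α) (hc : ar c = 0) (e₁ e₂ : RExp α ar V) : RExp α ar V
  | star (c : α) (hc : ar c = 0) (e : RExp α ar V) : RExp α ar V

namespace RExp

variable {α : Type} {ar : α → ℕ} {V : Type}

/-- The `𝓛`-language denoted by a rational expression, where `ρ` assigns a
tree language to each variable. -/
def lang (ρ : V → Set (GTree α ar)) : RExp α ar V → Set (GTree α ar)
  | zero => ∅
  | var v => ρ v
  | node f es => { t | ∃ ch : Fin (ar f) → GTree α ar,
      t = GTree.node f ch ∧ ∀ i, ch i ∈ lang ρ (es i) }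
  | plus e₁ e₂ => lang ρ e₁ ∪ lang ρ e₂
  | prod c _ e₁ e₂ => GTree.lprod c (lang ρ e₁) (lang ρ e₂)
  | star c hc e => GTree.closure c hc (lang ρ e)

/-- Substitution of the expression `F` for the variable `x`. -/
noncomputable def subst (x : V) (F : RExp α ar V) : RExp α ar V → RExp α ar V
  | zero => zero
  | var v => if v = x then F else var v
  | node f es => node f (fun i => subst x F (es i))
  | plus e₁ e₂ => plus (subst x F e₁) (subst x F e₂)
  | prod c hc e₁ e₂ => prod c hc (subst x F e₁) (subst x F e₂)
  | star c hc e => star c hc (subst x F e)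

/-- The variable `v` occurs in the expression. -/
def varOcc (v : V) : RExp α ar V → Prop
  | zero => False
  | var w => w = v
  | node _ es => ∃ i, varOcc v (es i)
  | plus e₁ e₂ => varOcc v e₁ ∨ varOcc v e₂
  | prod _ _ e₁ e₂ => varOcc v e₁ ∨ varOcc v e₂
  | star _ _ e => varOcc v e

/-- The symbol `b` is the subscript of a product `·_b` or a closure `^{*_b}`
occurring in the expression. -/
def opSym (b : α) : RExp α ar V → Prop
  | zero => False
  | var _ => False
  | node _ es => ∃ i, opSym b (es i)
  | plus e₁ e₂ => opSym b e₁ ∨ opSym b e₂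
  | prod c _ e₁ e₂ => c = b ∨ opSym b e₁ ∨ opSym b e₂
  | star c _ e => c = b ∨ opSym b e

/-- The symbol `s` occurs somewhere in the expression (as a node symbol or as
the subscript of an operator). -/
def symIn (s : α) : RExp α ar V → Prop
  | zero => False
  | var _ => False
  | node f es => f = s ∨ ∃ i, symIn s (es i)
  | plus e₁ e₂ => symIn s e₁ ∨ symIn s e₂
  | prod c _ e₁ e₂ => c = s ∨ symIn s e₁ ∨ symIn s e₂
  | star c _ e => c = s ∨ symIn s e

end RExp

/-- The output function of a tree automaton with transition set `Δ`:
`δ(f(t₁,…,tₙ)) = {q | ∃(f,q₁,…,qₙ,q) ∈ Δ, ∀ i, qᵢ ∈ δ(tᵢ)}`. -/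
def GTree.out {α : Type} {ar : α → ℕ} {Q : Type}
    (Δ : Set (Sigma fun f : α => (Fin (ar f) → Q) × Q)) : GTree α ar → Set Q
  | .node f ch => { q | ∃ qs : Fin (ar f) → Q,
      (⟨f, qs, q⟩ : Sigma fun f : α => (Fin (ar f) → Q) × Q) ∈ Δ ∧
      ∀ i, qs i ∈ GTree.out Δ (ch i) }

namespace RExp

variable {α : Type} {ar : α → ℕ} {V : Type}

theorem lang_subst (ρ : V → Set (GTree α ar)) (x : V) (F e : RExp α ar V) :
    lang ρ (subst x F e) = lang (Function.update ρ x (lang ρ F)) e := by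
  induction e with
  | zero => rfl
  | var v =>
    by_cases hv : v = x
    · subst hv
      simp only [subst, lang, if_true, Function.update_self]
    · simp only [subst, lang, if_neg hv, Function.update_of_ne hv]
  | node f es ih => simp only [subst, lang, ih]
  | plus e₁ e₂ ih₁ ih₂ => simp only [subst, lang, ih₁, ih₂]
  | prod c hc e₁ e₂ ih₁ ih₂ => simp only [subst, lang, ih₁, ih₂]
  | star c hc e ih => simp only [subst, lang, ih]

theorem lang_subst_of_eq {ρ : V → Set (GTree α ar)} {x : V} {F : RExp α ar V}
    (h : ρ x = lang ρ F) (e : RExp α ar V) : lang ρ (subst x F e) = lang ρ e := by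
  rw [lang_subst, ← h, Function.update_eq_self]

end RExp

/-- the system `𝒳` and the substituted system `𝒳^k` (where `F_k`
is substituted for `𝔼_k` in every other right-hand side) have the same
solutions. -/
theorem system_subst_equiv {α : Type} {ar : α → ℕ} {n : ℕ}
    (F : Fin n → RExp α ar (Fin n)) (k : Fin n)
    (L : Fin n → Set (GTree α ar)) :
    (∀ j, L j = RExp.lang L (F j)) ↔
      ∀ j, L j = RExp.lang L (if j = k then F k else RExp.subst k (F k) (F j)) := by
  have lang_rhs : ∀ j, L k = RExp.lang L (F k) →
      RExp.lang L (if j = k then F k else RExp.subst k (F k) (F j)) = RExp.lang L (F j) := by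
    intro j hk
    split_ifs with hj
    · rw [hj]
    · exact RExp.lang_subst_of_eq hk (F j)
  constructor
  · intro h j
    rw [lang_rhs j (h k)]
    exact h j
  · intro h
    have hk : L k = RExp.lang L (F k) := by simpa using h k
    intro j
    rw [← lang_rhs j hk]
    exact h j
end

section
/- Let 𝒳 = {𝔼_j = F_j | 1 ≤ j ≤ n} be an equation system over (Σ, {𝔼_1,…,𝔼_n}). Define 𝔼_j <_𝒳 𝔼_k if and only if the variable 𝔼_j occurs in F_k, and let ⪯_𝒳 be the transitive closure of <_𝒳. Call 𝒳 recursive if there exist variables 𝔼_j and 𝔼_k with 𝔼_j ⪯_𝒳 𝔼_k and 𝔼_k ⪯_𝒳 𝔼_j. If 𝒳 is not recursive, then 𝒳 admits a unique solution. -/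
attribute [local instance] Classical.propDecidable

/-!
The language of `F_k` depends only on the languages of the variables occurring in `F_k`.
Non-recursiveness says that the transitive closure of this dependency relation is
irreflexive, so on the finite set of variables the relation is well founded. A system
whose right-hand sides only look at strictly smaller variables of a well-founded relation
is solved by well-founded recursion, and any two solutions agree by well-founded induction.
-/

theorem RExp.lang_congr {α : Type} {ar : α → ℕ} {V : Type} {ρ ρ' : V → Set (GTree α ar)}
    (e : RExp α ar V) (h : ∀ v, RExp.varOcc v e → ρ v = ρ' v) :
    RExp.lang ρ e = RExp.lang ρ' e := by
  induction e with
  | zero => rfl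
  | var v => exact h v rfl
  | node f es ih =>
    have hes : ∀ i, RExp.lang ρ (es i) = RExp.lang ρ' (es i) := fun i =>
      ih i fun v hv => h v ⟨i, hv⟩
    simp only [RExp.lang, hes]
  | plus e₁ e₂ ih₁ ih₂ | prod c hc e₁ e₂ ih₁ ih₂ =>
    simp only [RExp.lang, ih₁ fun v hv => h v (.inl hv), ih₂ fun v hv => h v (.inr hv)]
  | star c hc e ih =>
    simp only [RExp.lang, ih h]

theorem Finite.wellFounded_of_irrefl_transGen {V : Type*} [Finite V] {r : V → V → Prop}
    (h : ∀ v, ¬ Relation.TransGen r v v) : WellFounded r :=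
  haveI : Std.Irrefl (Relation.TransGen r) := ⟨h⟩
  Subrelation.wf Relation.TransGen.single (Finite.wellFounded_of_trans_of_irrefl _)

theorem WellFounded.existsUnique_fixedPoint {V X : Type*} [Nonempty X] {r : V → V → Prop}
    (hr : WellFounded r) (Φ : (V → X) → V → X)
    (hΦ : ∀ L L' j, (∀ v, r v j → L v = L' v) → Φ L j = Φ L' j) :
    ∃! L : V → X, ∀ j, L j = Φ L j := by
  -- The default value is never seen by `Φ`, which only reads `r`-smaller arguments.
  let L : V → X := hr.fix fun j rec =>
    Φ (fun v => if h : r v j then rec v h else Classical.arbitrary X) j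
  have hL : ∀ j, L j = Φ L j := fun j =>
    (hr.fix_eq _ j).trans (hΦ _ _ j fun v hv => dif_pos hv)
  refine ⟨L, hL, fun L' hL' => funext fun j => ?_⟩
  induction j using hr.induction with
  | _ j ih => rw [hL' j, hL j]; exact hΦ _ _ j ih

/-- a non-recursive equation system admits a unique solution.
(`𝔼_j <_𝒳 𝔼_k` iff `𝔼_j` occurs in `F_k`; `⪯_𝒳` is the transitive closure;
`𝒳` is recursive if `𝔼_j ⪯_𝒳 𝔼_k` and `𝔼_k ⪯_𝒳 𝔼_j` for some `j`, `k`.) -/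
theorem nonrecursive_unique_solution {α : Type} {ar : α → ℕ} {n : ℕ}
    (F : Fin n → RExp α ar (Fin n))
    (hnr : ¬ ∃ j k : Fin n,
      Relation.TransGen (fun p q : Fin n => RExp.varOcc p (F q)) j k ∧
      Relation.TransGen (fun p q : Fin n => RExp.varOcc p (F q)) k j) :
    ∃! L : Fin n → Set (GTree α ar), ∀ j, L j = RExp.lang L (F j) := by
  have hwf : WellFounded fun p q : Fin n => RExp.varOcc p (F q) :=
    Finite.wellFounded_of_irrefl_transGen fun j hj => hnr ⟨j, j, hj, hj⟩
  exact hwf.existsUnique_fixedPoint (fun L j => RExp.lang L (F j))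
    fun L L' j h => RExp.lang_congr (F j) h
end

section
/- Let 𝒜 = (Σ, Q, Q_f, Δ) be a finite tree automaton over a graded alphabet Σ with Q = {1,…,n}, and let 𝒳_𝒜 be its associated equation system, consisting for each state q of the equation 𝔼_q = Σ_{(f,q_1,…,q_m,q) ∈ Δ} f(𝔼_{q_1},…,𝔼_{q_m}). If the n-tuple of tree languages (M_1,…,M_n) is a solution of 𝒳_𝒜, then M_j = L(j) for every state 1 ≤ j ≤ n, where L(j) is the down language of state j. Consequently, if (E_1,…,E_n) is a tuple of variable-free rational expressions whose languages form a solution of 𝒳_𝒜, then the accepted language satisfies L(𝒜) = ⋃_{j ∈ Q_f} L(E_j), i.e. L(𝒜) is denoted by the rational expression Σ_{j ∈ Q_f} E_j. -/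
attribute [local instance] Classical.propDecidable

/-! Every equation of `𝒳_𝒜` strips exactly one symbol off a tree, so membership of
`f(t₁,…,tₘ)` in a solution is decided by membership of the `tᵢ`; structural induction on trees
then pins every solution down to the down languages. -/

namespace GTree

variable {α : Type} {ar : α → ℕ} {Q : Type}

/-- The tuple `M` is a solution of the equation system `𝒳_𝒜` of the automaton with
transitions `Δ`. -/
def SolvesSystem (Δ : Set (Sigma fun f : α => (Fin (ar f) → Q) × Q))
    (M : Q → Set (GTree α ar)) : Prop :=
  ∀ q, M q = { t | ∃ (f : α) (qs : Fin (ar f) → Q) (ch : Fin (ar f) → GTree α ar),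
    (⟨f, qs, q⟩ : Sigma fun f : α => (Fin (ar f) → Q) × Q) ∈ Δ ∧
    t = node f ch ∧ ∀ i, ch i ∈ M (qs i) }

theorem SolvesSystem.mem_iff_mem_out {Δ : Set (Sigma fun f : α => (Fin (ar f) → Q) × Q)}
    {M : Q → Set (GTree α ar)} (hM : SolvesSystem Δ M) (t : GTree α ar) (q : Q) :
    t ∈ M q ↔ q ∈ out Δ t := by
  induction t generalizing q with
  | node f ch ih =>
    rw [hM q]
    constructor
    · rintro ⟨f', qs, ch', hqs, heq, hch⟩
      obtain ⟨rfl, hch'⟩ := node.inj heq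
      obtain rfl := eq_of_heq hch'
      exact ⟨qs, hqs, fun i => (ih i (qs i)).mp (hch i)⟩
    · rintro ⟨qs, hqs, hch⟩
      exact ⟨f, qs, ch, hqs, rfl, fun i => (ih i (qs i)).mpr (hch i)⟩

theorem SolvesSystem.eq_down {Δ : Set (Sigma fun f : α => (Fin (ar f) → Q) × Q)}
    {M : Q → Set (GTree α ar)} (hM : SolvesSystem Δ M) (q : Q) :
    M q = { t | q ∈ out Δ t } :=
  Set.ext fun t => hM.mem_iff_mem_out t q

end GTree

theorem automaton_system_solution_general {α : Type} {ar : α → ℕ} {n : ℕ}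
    (Δ : Set (Sigma fun f : α => (Fin (ar f) → Fin n) × Fin n))
    (Qf : Set (Fin n))
    (M : Fin n → Set (GTree α ar))
    (hM : ∀ q : Fin n, M q =
      { t : GTree α ar | ∃ (f : α) (qs : Fin (ar f) → Fin n) (ch : Fin (ar f) → GTree α ar),
          (⟨f, qs, q⟩ : Sigma fun f : α => (Fin (ar f) → Fin n) × Fin n) ∈ Δ ∧
          t = GTree.node f ch ∧ ∀ i, ch i ∈ M (qs i) })
    (E : Fin n → RExp α ar (Fin n))
    (hE : ∀ q : Fin n, RExp.lang (fun _ => (∅ : Set (GTree α ar))) (E q) =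
      { t : GTree α ar | ∃ (f : α) (qs : Fin (ar f) → Fin n) (ch : Fin (ar f) → GTree α ar),
          (⟨f, qs, q⟩ : Sigma fun f : α => (Fin (ar f) → Fin n) × Fin n) ∈ Δ ∧
          t = GTree.node f ch ∧
          ∀ i, ch i ∈ RExp.lang (fun _ => (∅ : Set (GTree α ar))) (E (qs i)) }) :
    (∀ q : Fin n, M q = { t : GTree α ar | q ∈ GTree.out Δ t }) ∧
      { t : GTree α ar | ∃ q ∈ Qf, q ∈ GTree.out Δ t } =
        ⋃ q ∈ Qf, RExp.lang (fun _ => (∅ : Set (GTree α ar))) (E q) := by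
  have hEsol : GTree.SolvesSystem Δ fun q => RExp.lang (fun _ => ∅) (E q) := hE
  refine ⟨GTree.SolvesSystem.eq_down hM, ?_⟩
  ext t
  simp only [Set.mem_iUnion, exists_prop, hEsol.mem_iff_mem_out]
  rfl

/-- let `𝒜` be a finite tree automaton with states `Fin n`. If the
tuple `M` is a solution of the associated system `𝒳_𝒜` (whose equation for `q`
says that `M q` is the union, over the transitions `(f,q_1,…,q_m,q) ∈ Δ`, of
`f(M q_1,…,M q_m)`), then `M q` is the down language of `q` for every state `q`.
Consequently, if `(E_1,…,E_n)` are variable-free rational expressions whose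
languages form a solution of `𝒳_𝒜`, then `L(𝒜) = ⋃_{q ∈ Q_f} L(E_q)`. -/
theorem automaton_system_solution {α : Type} {ar : α → ℕ} {n : ℕ}
    (Δ : Set (Sigma fun f : α => (Fin (ar f) → Fin n) × Fin n)) (hΔ : Δ.Finite)
    (Qf : Set (Fin n))
    (M : Fin n → Set (GTree α ar))
    (hM : ∀ q : Fin n, M q =
      { t : GTree α ar | ∃ (f : α) (qs : Fin (ar f) → Fin n) (ch : Fin (ar f) → GTree α ar),
          (⟨f, qs, q⟩ : Sigma fun f : α => (Fin (ar f) → Fin n) × Fin n) ∈ Δ ∧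
          t = GTree.node f ch ∧ ∀ i, ch i ∈ M (qs i) })
    (E : Fin n → RExp α ar (Fin n))
    (hEvf : ∀ j, ∀ v : Fin n, ¬ RExp.varOcc v (E j))
    (hE : ∀ q : Fin n, RExp.lang (fun _ => (∅ : Set (GTree α ar))) (E q) =
      { t : GTree α ar | ∃ (f : α) (qs : Fin (ar f) → Fin n) (ch : Fin (ar f) → GTree α ar),
          (⟨f, qs, q⟩ : Sigma fun f : α => (Fin (ar f) → Fin n) × Fin n) ∈ Δ ∧
          t = GTree.node f ch ∧
          ∀ i, ch i ∈ RExp.lang (fun _ => (∅ : Set (GTree α ar))) (E (qs i)) }) :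
    (∀ q : Fin n, M q = { t : GTree α ar | q ∈ GTree.out Δ t }) ∧
      { t : GTree α ar | ∃ q ∈ Qf, q ∈ GTree.out Δ t } =
        ⋃ q ∈ Qf, RExp.lang (fun _ => (∅ : Set (GTree α ar))) (E q) :=
  automaton_system_solution_general Δ Qf M hM E hE
end
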